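/- The Hilbert curve indexing satisfies a discrete locality (Hölder-type) bound: for the k-th iteration map h : {0,...,4^k−1} → {0,...,2^k−1}², there exists a constant C (independent of k) such that ‖h(m) − h(m')‖₂ ≤ C·√(|m − m'|) for all m, m'. -/

import Mathlib

/-!
Each quadrant of the level-`(k + 1)` curve is a copy of the level-`k` curve under a map that is
an isometry of the grid for the sup metric (which is Mathlib's `dist` on `ℕ × ℕ`), and the
level-`k` curve runs from `(0, 0)` to `(2 ^ k - 1, 0)`, so consecutive cells are adjacent even
across quadrant boundaries. Hence an aligned block of `4 ^ j` indices lies in a square of side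
`2 ^ j`, and any `4 ^ j` consecutive indices meet at most two such blocks joined by a unit step.
Taking `4 ^ j ≤ |m - m'| < 4 ^ (j + 1)` bounds the sup distance by `6 · 2 ^ j ≤ 6 √|m - m'|`,
and the Euclidean distance by `√2` times that.
-/

/-- The `k`-th iteration Hilbert curve indexing of the `2^k × 2^k` grid
(standard recursive construction). -/
def hilbert : ℕ → ℕ → ℕ × ℕ
  | 0, _ => (0, 0)
  | k + 1, m =>
    let q := m / 4 ^ k
    let (x, y) := hilbert k (m % 4 ^ k)
    let s := 2 ^ k
    if q = 0 then (y, x)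
    else if q = 1 then (x, y + s)
    else if q = 2 then (x + s, y + s)
    else (2 * s - 1 - y, s - 1 - x)

def quadrantMap (s q : ℕ) (p : ℕ × ℕ) : ℕ × ℕ :=
  if q = 0 then (p.2, p.1)
  else if q = 1 then (p.1, p.2 + s)
  else if q = 2 then (p.1 + s, p.2 + s)
  else (2 * s - 1 - p.2, s - 1 - p.1)

lemma hilbert_succ (k m : ℕ) :
    hilbert (k + 1) m = quadrantMap (2 ^ k) (m / 4 ^ k) (hilbert k (m % 4 ^ k)) := by
  simp only [hilbert, quadrantMap]

lemma hilbert_succ_mul_add (k q : ℕ) {r : ℕ} (hr : r < 4 ^ k) :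
    hilbert (k + 1) (4 ^ k * q + r) = quadrantMap (2 ^ k) q (hilbert k r) := by
  have h4 : 0 < 4 ^ k := by positivity
  rw [hilbert_succ, Nat.mul_add_div h4, Nat.div_eq_of_lt hr, Nat.mul_add_mod, Nat.mod_eq_of_lt hr,
    add_zero]

lemma quadrantMap_lt {s : ℕ} (q : ℕ) {p : ℕ × ℕ} (hp : p.1 < s ∧ p.2 < s) :
    (quadrantMap s q p).1 < 2 * s ∧ (quadrantMap s q p).2 < 2 * s := by
  unfold quadrantMap
  split_ifs <;> constructor <;> dsimp only <;> omega

lemma dist_quadrantMap {s : ℕ} (q : ℕ) {p p' : ℕ × ℕ} (hp : p.1 < s ∧ p.2 < s)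
    (hp' : p'.1 < s ∧ p'.2 < s) : dist (quadrantMap s q p) (quadrantMap s q p') = dist p p' := by
  unfold quadrantMap
  split_ifs
  · exact max_comm _ _
  · simp only [Prod.dist_eq, Nat.dist_eq]
    push_cast
    ring_nf
  · simp only [Prod.dist_eq, Nat.dist_eq]
    push_cast
    ring_nf
  · simp only [Prod.dist_eq, Nat.dist_eq]
    push_cast [Nat.cast_sub (by omega : p.2 ≤ 2 * s - 1), Nat.cast_sub (by omega : p'.2 ≤ 2 * s - 1),
      Nat.cast_sub (by omega : p.1 ≤ s - 1), Nat.cast_sub (by omega : p'.1 ≤ s - 1)]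
    rw [max_comm, abs_sub_comm, abs_sub_comm (p.2 : ℝ)]
    ring_nf

lemma hilbert_lt (k m : ℕ) : (hilbert k m).1 < 2 ^ k ∧ (hilbert k m).2 < 2 ^ k := by
  induction k generalizing m with
  | zero => simp [hilbert]
  | succ k ih =>
    rw [hilbert_succ, pow_succ, mul_comm _ 2]
    exact quadrantMap_lt _ (ih _)

lemma dist_lt_of_coord_lt {n : ℕ} {p p' : ℕ × ℕ} (hp : p.1 < n ∧ p.2 < n)
    (hp' : p'.1 < n ∧ p'.2 < n) : dist p p' < n := by
  have key {a b : ℕ} (ha : a < n) (hb : b < n) : dist a b < n := by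
    rw [Nat.dist_eq, abs_sub_lt_iff]
    have := (Nat.cast_lt (α := ℝ)).2 ha
    have := (Nat.cast_lt (α := ℝ)).2 hb
    constructor <;> linarith [Nat.cast_nonneg (α := ℝ) a, Nat.cast_nonneg (α := ℝ) b]
  rw [Prod.dist_eq]
  exact max_lt (key hp.1 hp'.1) (key hp.2 hp'.2)

lemma hilbert_zero (k : ℕ) : hilbert k 0 = (0, 0) := by
  induction k with
  | zero => rfl
  | succ k ih => simp [hilbert_succ, ih, quadrantMap]

lemma hilbert_pred_four_pow (k : ℕ) : hilbert k (4 ^ k - 1) = (2 ^ k - 1, 0) := by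
  induction k with
  | zero => rfl
  | succ k ih =>
    have h : 4 ^ (k + 1) - 1 = 4 ^ k * 3 + (4 ^ k - 1) := by
      have : 0 < 4 ^ k := by positivity
      rw [pow_succ]; omega
    rw [h, hilbert_succ_mul_add _ _ (by simp), ih]
    simp [quadrantMap, pow_succ, mul_comm]

lemma dist_hilbert_succ_le_one (k m : ℕ) (hm : m + 1 < 4 ^ k) :
    dist (hilbert k (m + 1)) (hilbert k m) ≤ 1 := by
  induction k generalizing m with
  | zero => simp at hm
  | succ k ih =>
    have h4 : 0 < 4 ^ k := by positivity
    obtain ⟨q, r, hr, rfl⟩ : ∃ q r, r < 4 ^ k ∧ m = 4 ^ k * q + r :=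
      ⟨m / 4 ^ k, m % 4 ^ k, Nat.mod_lt _ h4, (Nat.div_add_mod m _).symm⟩
    rcases Nat.lt_or_ge (r + 1) (4 ^ k) with hr1 | hr1
    · rw [add_assoc, hilbert_succ_mul_add _ _ hr1, hilbert_succ_mul_add _ _ hr,
        dist_quadrantMap _ (hilbert_lt _ _) (hilbert_lt _ _)]
      exact ih r hr1
    · -- crossing from the last cell of quadrant `q` to the first cell of quadrant `q + 1`
      have hr' : r = 4 ^ k - 1 := by omega
      have hsucc : 4 ^ k * q + r + 1 = 4 ^ k * (q + 1) + 0 := by rw [hr', mul_add_one]; omega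
      have hq : q < 3 := by
        rw [hsucc, pow_succ, add_zero] at hm
        have := Nat.lt_of_mul_lt_mul_left hm
        omega
      rw [hsucc, hilbert_succ_mul_add _ _ h4, hilbert_succ_mul_add _ _ hr, hr', hilbert_zero,
        hilbert_pred_four_pow]
      have h2 : 2 * 2 ^ k - 1 = 2 ^ k - 1 + 2 ^ k := by have := Nat.one_le_two_pow (n := k); omega
      interval_cases q <;> simp [quadrantMap, Prod.dist_eq, Nat.dist_eq, h2]

lemma dist_hilbert_lt_of_div_eq (k j : ℕ) {m m' : ℕ} (h : m / 4 ^ j = m' / 4 ^ j) :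
    dist (hilbert k m) (hilbert k m') < 2 ^ j := by
  induction k generalizing m m' with
  | zero => simp [hilbert]
  | succ k ih =>
    rcases Nat.lt_or_ge k j with hkj | hjk
    · calc dist (hilbert (k + 1) m) (hilbert (k + 1) m') < (2 ^ (k + 1) : ℕ) :=
            dist_lt_of_coord_lt (hilbert_lt _ _) (hilbert_lt _ _)
        _ ≤ 2 ^ j := by exact_mod_cast Nat.pow_le_pow_right two_pos hkj
    · have hsplit : 4 ^ k = 4 ^ j * 4 ^ (k - j) := by rw [← pow_add, Nat.add_sub_cancel' hjk]
      have hq : m / 4 ^ k = m' / 4 ^ k := by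
        rw [hsplit, ← Nat.div_div_eq_div_mul, ← Nat.div_div_eq_div_mul, h]
      have hr : m % 4 ^ k / 4 ^ j = m' % 4 ^ k / 4 ^ j := by
        rw [hsplit, Nat.mod_mul_right_div_self, Nat.mod_mul_right_div_self, h]
      rw [hilbert_succ, hilbert_succ, hq, dist_quadrantMap _ (hilbert_lt _ _) (hilbert_lt _ _)]
      exact ih hr

lemma dist_hilbert_le_of_le_add (k j : ℕ) {m m' : ℕ} (hle : m ≤ m') (hclose : m' ≤ m + 4 ^ j)
    (hm' : m' < 4 ^ k) : dist (hilbert k m) (hilbert k m') ≤ 3 * 2 ^ j := by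
  have hP : 0 < 4 ^ j := by positivity
  have h2 : (1 : ℝ) ≤ 2 ^ j := one_le_pow₀ one_le_two
  obtain ⟨a, hma⟩ : ∃ a, m / 4 ^ j = a := ⟨_, rfl⟩
  have ha := (Nat.div_eq_iff hP).1 hma
  rcases Nat.lt_or_ge m' (a * 4 ^ j + 4 ^ j) with hm'a | hm'a
  · have hm'a : m' / 4 ^ j = a := (Nat.div_eq_iff hP).2 ⟨by omega, by omega⟩
    have := dist_hilbert_lt_of_div_eq k j (hma.trans hm'a.symm)
    linarith
  · -- pass through the last cell `b - 1` of the block of `m` and the first cell `b` of the next one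
    obtain ⟨b, hb⟩ : ∃ b, a * 4 ^ j + 4 ^ j = b := ⟨_, rfl⟩
    have hb1 : (b - 1) / 4 ^ j = a := (Nat.div_eq_iff hP).2 (by omega)
    have hbm' : b / 4 ^ j = m' / 4 ^ j := by
      rw [(Nat.div_eq_iff hP).2 (by rw [add_one_mul]; omega : (a + 1) * 4 ^ j ≤ b ∧ _),
        (Nat.div_eq_iff hP).2 (by rw [add_one_mul]; omega : (a + 1) * 4 ^ j ≤ m' ∧ _)]
    have hstep := dist_hilbert_succ_le_one k (b - 1) (by omega)
    rw [Nat.sub_add_cancel (by omega)] at hstep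
    calc dist (hilbert k m) (hilbert k m')
        ≤ dist (hilbert k m) (hilbert k (b - 1)) + dist (hilbert k (b - 1)) (hilbert k b)
          + dist (hilbert k b) (hilbert k m') := dist_triangle4 _ _ _ _
      _ ≤ 2 ^ j + 1 + 2 ^ j := by
        gcongr
        · exact (dist_hilbert_lt_of_div_eq k j (hma.trans hb1.symm)).le
        · rw [dist_comm]; exact hstep
        · exact (dist_hilbert_lt_of_div_eq k j hbm').le
      _ ≤ 3 * 2 ^ j := by linarith

lemma dist_hilbert_le_six_mul_sqrt (k : ℕ) {m m' : ℕ} (hm : m < 4 ^ k) (hm' : m' < 4 ^ k) :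
    dist (hilbert k m) (hilbert k m') ≤ 6 * √(dist m m') := by
  wlog hle : m ≤ m' generalizing m m'
  · rw [dist_comm, dist_comm m]
    exact this hm' hm (le_of_not_ge hle)
  obtain ⟨d, rfl⟩ := Nat.exists_eq_add_of_le hle
  rcases Nat.eq_zero_or_pos d with rfl | hd
  · simp
  set j := Nat.log 4 d
  have hdj : d < 4 ^ (j + 1) := Nat.lt_pow_succ_log_self (by norm_num) d
  have hdist : dist m (m + d) = d := by simp [Nat.dist_eq]
  have hjd : (2 : ℝ) ^ j ≤ √d := by
    rw [Real.le_sqrt (by positivity) (by positivity), ← pow_mul, mul_comm, pow_mul]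
    exact_mod_cast Nat.pow_log_le_self 4 hd.ne'
  calc dist (hilbert k m) (hilbert k (m + d)) ≤ 3 * 2 ^ (j + 1) :=
        dist_hilbert_le_of_le_add k (j + 1) hle (by omega) hm'
    _ = 6 * 2 ^ j := by ring
    _ ≤ 6 * √(dist m (m + d)) := by rw [hdist]; gcongr

lemma euclidean_dist_le_sqrt_two_mul_dist (p p' : ℕ × ℕ) :
    √(((p.1 : ℝ) - p'.1) ^ 2 + ((p.2 : ℝ) - p'.2) ^ 2) ≤ √2 * dist p p' := by
  rw [← Real.sqrt_sq dist_nonneg, ← Real.sqrt_mul zero_le_two]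
  apply Real.sqrt_le_sqrt
  have hx : |(p.1 : ℝ) - p'.1| ≤ dist p p' := by
    rw [Prod.dist_eq, ← Nat.dist_eq]; exact le_max_left _ _
  have hy : |(p.2 : ℝ) - p'.2| ≤ dist p p' := by
    rw [Prod.dist_eq, ← Nat.dist_eq]; exact le_max_right _ _
  have hx2 := pow_le_pow_left₀ (abs_nonneg _) hx 2
  have hy2 := pow_le_pow_left₀ (abs_nonneg _) hy 2
  rw [sq_abs] at hx2 hy2
  linarith

/-- discrete locality / Hölder-type bound: there is a constant
`C` independent of the iteration `k` such that the Euclidean distance between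
the grid cells `hilbert k m` and `hilbert k m'` is at most `C·√|m − m'|`. -/
theorem hilbert_locality :
    ∃ C : ℝ, 0 < C ∧ ∀ (k m m' : ℕ), m < 4 ^ k → m' < 4 ^ k →
      Real.sqrt ((((hilbert k m).1 : ℝ) - ((hilbert k m').1 : ℝ)) ^ 2 +
          (((hilbert k m).2 : ℝ) - ((hilbert k m').2 : ℝ)) ^ 2) ≤
        C * Real.sqrt |(m : ℝ) - (m' : ℝ)| := by
  refine ⟨6 * √2, by positivity, fun k m m' hm hm' => ?_⟩
  calc _ ≤ √2 * dist (hilbert k m) (hilbert k m') := euclidean_dist_le_sqrt_two_mul_dist _ _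
    _ ≤ √2 * (6 * √(dist m m')) := by gcongr; exact dist_hilbert_le_six_mul_sqrt k hm hm'
    _ = 6 * √2 * √|(m : ℝ) - m'| := by rw [Nat.dist_eq]; ring
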